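/- Performance difference lemma (Lemma 4 of the paper): For any two stationary stochastic policies π1 and π2 in a finite MDP with discount factor γ ∈ (0,1), J(π1) = J(π2) + E_{τ∼π1}[ Σ_{t=0}^∞ γ^t A_{π2}(s_t, a_t) ], where the expectation is over trajectories τ = (s_0, a_0, s_1, a_1, …) generated by running π1 from the initial distribution ρ0. -/

import Mathlib

open scoped BigOperators

/-- A finite Markov decision process with state space `S`, action space `A`,
transition kernel `P`, reward `r`, initial distribution `ρ0`, discount `γ ∈ (0,1)`. -/
structure MDP (S A : Type) [Fintype S] [Fintype A] where
  P : S → A → S → ℝ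
  P_nonneg : ∀ s a s', 0 ≤ P s a s'
  P_sum_one : ∀ s a, (∑ s', P s a s') = 1
  r : S → A → ℝ
  ρ0 : S → ℝ
  ρ0_nonneg : ∀ s, 0 ≤ ρ0 s
  ρ0_sum_one : (∑ s, ρ0 s) = 1
  γ : ℝ
  γ_pos : 0 < γ
  γ_lt_one : γ < 1

/-- A stationary stochastic policy: a probability distribution over actions for each state. -/
structure Policy (S A : Type) [Fintype S] [Fintype A] where
  p : S → A → ℝ
  nonneg : ∀ s a, 0 ≤ p s a
  sum_one : ∀ s, (∑ a, p s a) = 1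

namespace MDP

variable {S A : Type} [Fintype S] [Fintype A]

/-- The distribution of the state at time `t`, starting from the initial distribution `μ`
and following policy `π`. -/
noncomputable def stateDist (M : MDP S A) (π : Policy S A) (μ : S → ℝ) : ℕ → S → ℝ
  | 0 => μ
  | (t + 1) => fun s' => ∑ s, ∑ a, M.stateDist π μ t s * π.p s a * M.P s a s'

/-- `E_{τ∼π}[ Σ_{t=0}^∞ γ^t f(s_t, a_t) ]` for trajectories started from the
initial state distribution `μ` and generated by policy `π`. -/
noncomputable def expSum (M : MDP S A) (π : Policy S A) (μ : S → ℝ) (f : S → A → ℝ) : ℝ :=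
  ∑' t : ℕ, M.γ ^ t * ∑ s, ∑ a, M.stateDist π μ t s * π.p s a * f s a

/-- The expected discounted return `J(π)`. -/
noncomputable def J (M : MDP S A) (π : Policy S A) : ℝ :=
  M.expSum π M.ρ0 M.r

/-- The value function `V_π(s)`. -/
noncomputable def V (M : MDP S A) [DecidableEq S] (π : Policy S A) (s : S) : ℝ :=
  M.expSum π (fun s' => if s' = s then 1 else 0) M.r

/-- The action-value function `Q_π(s,a)`. -/
noncomputable def Q (M : MDP S A) [DecidableEq S] (π : Policy S A) (s : S) (a : A) : ℝ :=
  M.r s a + M.γ * ∑ s', M.P s a s' * M.V π s'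

/-- The advantage function `A_π(s,a) = Q_π(s,a) − V_π(s)`. -/
noncomputable def Adv (M : MDP S A) [DecidableEq S] (π : Policy S A) (s : S) (a : A) : ℝ :=
  M.Q π s a - M.V π s

/-- The discounted state visitation distribution `d_π(s) = (1−γ) Σ_t γ^t Pr(s_t = s)`. -/
noncomputable def d (M : MDP S A) (π : Policy S A) (s : S) : ℝ :=
  (1 - M.γ) * ∑' t : ℕ, M.γ ^ t * M.stateDist π M.ρ0 t s

end MDP

/-!
The advantage `A_{π₂}(s, a) = r(s, a) + γ Σ_{s'} P(s'|s, a) V_{π₂}(s') - V_{π₂}(s)` is the reward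
`r` shaped by the potential `V_{π₂}`. Along the state distributions of `π₁` the shaping terms
telescope, `Σ_t γ^t (γ ⟨d_{t+1}, v⟩ - ⟨d_t, v⟩) = -⟨ρ₀, v⟩` for any potential `v`, so the
discounted advantage under `π₁` is `J(π₁) - ⟨ρ₀, V_{π₂}⟩`, and `⟨ρ₀, V_{π₂}⟩ = J(π₂)` because the
state distributions depend linearly on the initial distribution.
-/

namespace MDP

variable {S A : Type} [Fintype S] [Fintype A] (M : MDP S A) (π : Policy S A)

theorem sum_abs_stateDist_le (μ : S → ℝ) (t : ℕ) :
    ∑ s, |M.stateDist π μ t s| ≤ ∑ s, |μ s| := by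
  induction t with
  | zero => rfl
  | succ t ih =>
    calc ∑ s', |M.stateDist π μ (t + 1) s'|
        ≤ ∑ s', ∑ s, ∑ a, |M.stateDist π μ t s| * π.p s a * M.P s a s' := by
          refine Finset.sum_le_sum fun s' _ => (Finset.abs_sum_le_sum_abs _ _).trans ?_
          refine Finset.sum_le_sum fun s _ => (Finset.abs_sum_le_sum_abs _ _).trans ?_
          refine Finset.sum_le_sum fun a _ => ?_
          rw [abs_mul, abs_mul, abs_of_nonneg (π.nonneg s a), abs_of_nonneg (M.P_nonneg s a s')]
      _ = ∑ s, |M.stateDist π μ t s| := by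
          rw [Finset.sum_comm]
          refine Finset.sum_congr rfl fun s _ => ?_
          rw [Finset.sum_comm]
          simp only [← Finset.mul_sum, M.P_sum_one, mul_one, π.sum_one]
      _ ≤ ∑ s, |μ s| := ih

theorem abs_sum_stateDist_mul_le (μ g : S → ℝ) (t : ℕ) :
    |∑ s, M.stateDist π μ t s * g s| ≤ (∑ s, |μ s|) * ∑ s, |g s| :=
  calc |∑ s, M.stateDist π μ t s * g s|
      ≤ ∑ s, |M.stateDist π μ t s| * ∑ s', |g s'| := by
        refine (Finset.abs_sum_le_sum_abs _ _).trans (Finset.sum_le_sum fun s _ => ?_)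
        rw [abs_mul]
        exact mul_le_mul_of_nonneg_left
          (Finset.single_le_sum (fun s' _ => abs_nonneg (g s')) (Finset.mem_univ s)) (abs_nonneg _)
    _ ≤ (∑ s, |μ s|) * ∑ s, |g s| := by
        rw [← Finset.sum_mul]
        exact mul_le_mul_of_nonneg_right (M.sum_abs_stateDist_le π μ t)
          (Finset.sum_nonneg fun s _ => abs_nonneg _)

theorem summable_discounted_sum_stateDist_mul (μ g : S → ℝ) :
    Summable fun t : ℕ => M.γ ^ t * ∑ s, M.stateDist π μ t s * g s := by
  refine Summable.of_norm_bounded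
    ((summable_geometric_of_lt_one M.γ_pos.le M.γ_lt_one).mul_right
      ((∑ s, |μ s|) * ∑ s, |g s|)) fun t => ?_
  rw [norm_mul, norm_pow, Real.norm_of_nonneg M.γ_pos.le, Real.norm_eq_abs]
  exact mul_le_mul_of_nonneg_left (M.abs_sum_stateDist_mul_le π μ g t) (by positivity [M.γ_pos])

theorem sum_sum_stateDist_mul (μ : S → ℝ) (f : S → A → ℝ) (t : ℕ) :
    ∑ s, ∑ a, M.stateDist π μ t s * π.p s a * f s a
      = ∑ s, M.stateDist π μ t s * ∑ a, π.p s a * f s a := by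
  simp only [Finset.mul_sum, mul_assoc]

theorem sum_stateDist_succ_mul (μ g : S → ℝ) (t : ℕ) :
    ∑ s', M.stateDist π μ (t + 1) s' * g s'
      = ∑ s, ∑ a, M.stateDist π μ t s * π.p s a * ∑ s', M.P s a s' * g s' := by
  simp only [stateDist, Finset.sum_mul, Finset.mul_sum, mul_assoc]
  rw [Finset.sum_comm]
  exact Finset.sum_congr rfl fun s _ => Finset.sum_comm

theorem summable_expSum (μ : S → ℝ) (f : S → A → ℝ) :
    Summable fun t : ℕ => M.γ ^ t * ∑ s, ∑ a, M.stateDist π μ t s * π.p s a * f s a := by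
  simpa only [sum_sum_stateDist_mul] using
    M.summable_discounted_sum_stateDist_mul π μ fun s => ∑ a, π.p s a * f s a

theorem expSum_potential_shaping (μ v : S → ℝ) (f : S → A → ℝ) :
    M.expSum π μ (fun s a => f s a + M.γ * ∑ s', M.P s a s' * v s' - v s)
      = M.expSum π μ f - ∑ s, μ s * v s := by
  set b : ℕ → ℝ := fun t => M.γ ^ t * ∑ s, M.stateDist π μ t s * v s
  have hb : Summable b := M.summable_discounted_sum_stateDist_mul π μ v
  have hb₁ : Summable fun t => b (t + 1) := (summable_nat_add_iff 1).2 hb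
  have hterm : ∀ t : ℕ,
      M.γ ^ t * ∑ s, ∑ a, M.stateDist π μ t s * π.p s a
          * (f s a + M.γ * ∑ s', M.P s a s' * v s' - v s)
        = M.γ ^ t * ∑ s, ∑ a, M.stateDist π μ t s * π.p s a * f s a + (b (t + 1) - b t) := by
    intro t
    have hv : ∑ s, ∑ a, M.stateDist π μ t s * π.p s a * v s
        = ∑ s, M.stateDist π μ t s * v s := by
      rw [sum_sum_stateDist_mul]
      simp only [← Finset.sum_mul, π.sum_one, one_mul]
    simp only [b, M.sum_stateDist_succ_mul, mul_add, mul_sub, Finset.sum_add_distrib,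
      Finset.sum_sub_distrib, hv, pow_succ]
    simp only [← Finset.mul_sum, mul_left_comm _ M.γ]
    ring
  have htel : ∑' t, (b (t + 1) - b t) = -b 0 := by
    rw [hb₁.tsum_sub hb, hb.tsum_eq_zero_add]
    ring
  rw [expSum, expSum, tsum_congr hterm,
    (M.summable_expSum π μ f).tsum_add (hb₁.sub hb), htel]
  simp [b, stateDist, sub_eq_add_neg]

theorem stateDist_eq_sum_mul_stateDist_indicator [DecidableEq S] (μ : S → ℝ) (t : ℕ) (s : S) :
    M.stateDist π μ t s
      = ∑ s₀, μ s₀ * M.stateDist π (fun s' => if s' = s₀ then 1 else 0) t s := by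
  induction t generalizing s with
  | zero => simp [stateDist]
  | succ t ih =>
    simp only [stateDist, ih, Finset.sum_mul, Finset.mul_sum, mul_assoc]
    exact (Finset.sum_congr rfl fun _ _ => Finset.sum_comm).trans Finset.sum_comm

theorem expSum_eq_sum_mul_expSum_indicator [DecidableEq S] (μ : S → ℝ) (f : S → A → ℝ) :
    M.expSum π μ f
      = ∑ s₀, μ s₀ * M.expSum π (fun s' => if s' = s₀ then 1 else 0) f := by
  simp only [expSum, ← tsum_mul_left]
  rw [← Summable.tsum_finsetSum fun s₀ _ => (M.summable_expSum π _ f).mul_left (μ s₀)]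
  refine tsum_congr fun t => ?_
  simp only [M.stateDist_eq_sum_mul_stateDist_indicator π μ t, Finset.sum_mul, Finset.mul_sum]
  refine (Finset.sum_congr rfl fun _ _ => Finset.sum_comm).trans
    (Finset.sum_comm.trans (Finset.sum_congr rfl fun _ _ => ?_))
  exact Finset.sum_congr rfl fun _ _ => Finset.sum_congr rfl fun _ _ => by ring

theorem J_eq_sum_mul_V [DecidableEq S] : M.J π = ∑ s, M.ρ0 s * M.V π s :=
  M.expSum_eq_sum_mul_expSum_indicator π M.ρ0 M.r

end MDP

theorem performance_difference_general {S A : Type} [Fintype S] [Fintype A]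
    [DecidableEq S] (M : MDP S A) (π1 π2 : Policy S A) :
    M.J π1 = M.J π2 + M.expSum π1 M.ρ0 (fun s a => M.Adv π2 s a) := by
  have hAdv : (fun s a => M.Adv π2 s a)
      = fun s a => M.r s a + M.γ * ∑ s', M.P s a s' * M.V π2 s' - M.V π2 s := rfl
  rw [hAdv, M.expSum_potential_shaping, ← M.J_eq_sum_mul_V, MDP.J]
  ring

/-- Performance difference lemma: for any two stationary stochastic policies
`π1` and `π2` in a finite MDP,
`J(π1) = J(π2) + E_{τ∼π1}[ Σ_t γ^t A_{π2}(s_t, a_t) ]`. -/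
theorem performance_difference {S A : Type} [Fintype S] [Fintype A] [Nonempty S] [Nonempty A]
    [DecidableEq S] (M : MDP S A) (π1 π2 : Policy S A) :
    M.J π1 = M.J π2 + M.expSum π1 M.ρ0 (fun s a => M.Adv π2 s a) :=
  performance_difference_general M π1 π2
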